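/- arXiv:2104.01719 — 2 statements merged into one kernel-verified Lean document; each statement's English description precedes it below -/
import Mathlib

section
/- (Coefficient formulas.) Assume t_k = n_k^⊥ for k=1,2,3. Let γ₁,γ₂,γ₃∈ℝ² be constant vectors and set τ := Curl^s( Σ_{i=1}^{3} γ_i φ_i ). Then for each k=1,2,3 the coefficients are recovered from τ by γ_k·n_k = (ℓ_k²/2) n_kᵀ (∂_{t_k}τ) n_k and γ_k·t_k = (ℓ_k²/2) n_kᵀ (∂_{n_k}τ) n_k + ℓ_k² t_kᵀ (∂_{t_k}τ) n_k, where ∂_gτ is the (constant) entrywise directional derivative of the affine matrix field τ along g. -/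
/-!
Since `Curl φ *ᵥ v = -∂_{v⊥} φ`, every bilinear form `u ⬝ᵥ Curl^s φ *ᵥ v` is a combination of
first derivatives of `φ = ∑ γ_i φ_i`, and its derivative along `g` is the same combination of the
constant second derivatives `∂_g ∂_w φ_i = ∂_g λ_{i-1} ∂_w λ_{i+1} + ∂_g λ_{i+1} ∂_w λ_{i-1}`.
Writing `p_{k+1} - p_{k-1} = σ t_k` (so `σ² = ℓ_k²`), the barycentric coordinates satisfy
`σ ∂_{t_k} λ_j = δ_{j,k+1} - δ_{j,k-1}`, hence `σ² ∂_{t_k} ∂_{t_k} φ_i = -2 δ_{ik}`: only `γ_k`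
survives. In the second formula the mixed terms `∂_n ∂_t φ_i` cancel by symmetry.
-/

open Matrix

noncomputable def Curl (r : (Fin 2 → ℝ) → Fin 2 → ℝ) (x : Fin 2 → ℝ) :
    Matrix (Fin 2) (Fin 2) ℝ :=
  Matrix.of fun i j =>
    if j = 0 then -(fderiv ℝ r x ![0, 1] i) else fderiv ℝ r x ![1, 0] i

noncomputable def CurlS (r : (Fin 2 → ℝ) → Fin 2 → ℝ) (x : Fin 2 → ℝ) :
    Matrix (Fin 2) (Fin 2) ℝ :=
  (2⁻¹ : ℝ) • (Curl r x + (Curl r x)ᵀ)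

noncomputable def DirD (τ : (Fin 2 → ℝ) → Matrix (Fin 2) (Fin 2) ℝ) (g : Fin 2 → ℝ) :
    Matrix (Fin 2) (Fin 2) ℝ :=
  Matrix.of fun i j => fderiv ℝ (fun x => τ x i j) 0 g

def perp (v : Fin 2 → ℝ) : Fin 2 → ℝ := ![-v 1, v 0]

lemma perp_perp (v : Fin 2 → ℝ) : perp (perp v) = -v := by
  ext i; fin_cases i <;> simp [perp]

lemma Curl_mulVec (r : (Fin 2 → ℝ) → Fin 2 → ℝ) (x v : Fin 2 → ℝ) :
    Curl r x *ᵥ v = -fderiv ℝ r x (perp v) := by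
  have hv : perp v = (-v 1) • ![1, 0] + v 0 • ![0, 1] := by
    ext i; fin_cases i <;> simp [perp]
  ext i
  rw [hv, map_add, map_smul, map_smul]
  simp [Curl, mulVec, dotProduct]
  ring

lemma dotProduct_CurlS_mulVec (r : (Fin 2 → ℝ) → Fin 2 → ℝ) (x u v : Fin 2 → ℝ) :
    u ⬝ᵥ CurlS r x *ᵥ v =
      -(u ⬝ᵥ fderiv ℝ r x (perp v) + v ⬝ᵥ fderiv ℝ r x (perp u)) / 2 := by
  rw [CurlS, smul_mulVec, add_mulVec, dotProduct_smul, dotProduct_add, mulVec_transpose,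
    dotProduct_comm u (v ᵥ* _), ← dotProduct_mulVec, Curl_mulVec, Curl_mulVec]
  simp only [dotProduct_neg, smul_eq_mul]
  ring

lemma CurlS_apply (r : (Fin 2 → ℝ) → Fin 2 → ℝ) (x : Fin 2 → ℝ) (i j : Fin 2) :
    CurlS r x i j = -(fderiv ℝ r x (perp (Pi.single j 1)) i +
      fderiv ℝ r x (perp (Pi.single i 1)) j) / 2 := by
  have := dotProduct_CurlS_mulVec r x (Pi.single i 1) (Pi.single j 1)
  simpa [mulVec_single_one, single_dotProduct] using this

-- `r'' g` is linear, so the point at which its `CurlS` is taken is immaterial.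
lemma DirD_CurlS {r : (Fin 2 → ℝ) → Fin 2 → ℝ}
    {r' : (Fin 2 → ℝ) → (Fin 2 → ℝ) →L[ℝ] (Fin 2 → ℝ)}
    {r'' : (Fin 2 → ℝ) →L[ℝ] (Fin 2 → ℝ) →L[ℝ] (Fin 2 → ℝ)}
    (hr : ∀ x, HasFDerivAt r (r' x) x) (hr' : HasFDerivAt r' r'' 0) (g : Fin 2 → ℝ) :
    DirD (CurlS r) g = CurlS (r'' g) 0 := by
  have hr'_apply (w : Fin 2 → ℝ) (i : Fin 2) : HasFDerivAt (fun x => r' x w i)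
      ((ContinuousLinearMap.proj i).comp (r''.flip w)) 0 := by
    simpa using hasFDerivAt_pi'.1 (hr'.clm_apply (hasFDerivAt_const w 0)) i
  have hfd (x : Fin 2 → ℝ) : fderiv ℝ r x = r' x := (hr x).fderiv
  ext i j
  simp only [DirD, of_apply, CurlS_apply, hfd, ContinuousLinearMap.fderiv]
  have h : HasFDerivAt (fun x => -(r' x (perp (Pi.single j 1)) i +
      r' x (perp (Pi.single i 1)) j) / 2) _ 0 :=
    (((hr'_apply _ i).add (hr'_apply _ j)).neg).mul_const (2⁻¹ : ℝ)
  rw [h.fderiv]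
  simp
  ring

section SecondDerivative

variable {ι E F : Type*} [Fintype ι] [NormedAddCommGroup E] [NormedSpace ℝ E]
  [NormedAddCommGroup F] [NormedSpace ℝ F]

noncomputable def hessianSumMulSmul (u' v' : ι → E →L[ℝ] ℝ) (γ : ι → F) :
    E →L[ℝ] E →L[ℝ] F :=
  ∑ i, ((u' i).smulRight ((v' i).smulRight (γ i)) + (v' i).smulRight ((u' i).smulRight (γ i)))

lemma hessianSumMulSmul_apply (u' v' : ι → E →L[ℝ] ℝ) (γ : ι → F) (g w : E) :
    hessianSumMulSmul u' v' γ g w = ∑ i, (u' i g * v' i w + v' i g * u' i w) • γ i := by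
  simp [hessianSumMulSmul, add_smul, mul_smul]

lemma hessianSumMulSmul_comm (u' v' : ι → E →L[ℝ] ℝ) (γ : ι → F) (g w : E) :
    hessianSumMulSmul u' v' γ g w = hessianSumMulSmul u' v' γ w g := by
  simp only [hessianSumMulSmul_apply]
  congr! 2 with i
  ring

variable {u v : ι → E → ℝ} {u' v' : ι → E →L[ℝ] ℝ} {x : E}

lemma hasFDerivAt_sum_mul_smul (hu : ∀ i, HasFDerivAt (u i) (u' i) x)
    (hv : ∀ i, HasFDerivAt (v i) (v' i) x) (γ : ι → F) :
    HasFDerivAt (fun y => ∑ i, (u i y * v i y) • γ i)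
      (∑ i, (u i x • (v' i).smulRight (γ i) + v i x • (u' i).smulRight (γ i))) x := by
  refine HasFDerivAt.fun_sum fun i _ => ?_
  have hD : (u i x • v' i + v i x • u' i).smulRight (γ i) =
      u i x • (v' i).smulRight (γ i) + v i x • (u' i).smulRight (γ i) := by
    ext w
    simp [add_smul, mul_smul]
  exact hD ▸ ((hu i).mul (hv i)).smul_const (γ i)

lemma hasFDerivAt_sum_smul_smulRight (hu : ∀ i, HasFDerivAt (u i) (u' i) x)
    (hv : ∀ i, HasFDerivAt (v i) (v' i) x) (γ : ι → F) :
    HasFDerivAt (fun y => ∑ i, (u i y • (v' i).smulRight (γ i) + v i y • (u' i).smulRight (γ i)))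
      (hessianSumMulSmul u' v' γ) x :=
  HasFDerivAt.fun_sum fun i _ =>
    ((hu i).smul_const ((v' i).smulRight (γ i))).add ((hv i).smul_const ((u' i).smulRight (γ i)))

end SecondDerivative

lemma edgeIndicator_mul {R : Type*} [Ring R] (i k : ZMod 3) :
    (((if i - 1 = k + 1 then 1 else 0) - (if i - 1 = k - 1 then 1 else 0)) *
      ((if i + 1 = k + 1 then 1 else 0) - (if i + 1 = k - 1 then 1 else 0)) : R) =
      if i = k then -1 else 0 := by
  have h : (((if i - 1 = k + 1 then 1 else 0) - (if i - 1 = k - 1 then 1 else 0)) *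
      ((if i + 1 = k + 1 then 1 else 0) - (if i + 1 = k - 1 then 1 else 0)) : ℤ) =
      if i = k then -1 else 0 := by
    revert i k; decide
  simpa [apply_ite (Int.cast : ℤ → R)] using congrArg (Int.cast : ℤ → R) h

lemma sq_smul_hessianSumMulSmul_tangent {E F : Type*} [NormedAddCommGroup E] [NormedSpace ℝ E]
    [NormedAddCommGroup F] [NormedSpace ℝ F] {D : ZMod 3 → E →L[ℝ] ℝ} {k : ZMod 3} {σ : ℝ}
    {t : E} (hD : ∀ j, σ * D j t = (if j = k + 1 then 1 else 0) - (if j = k - 1 then 1 else 0))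
    (γ : ZMod 3 → F) :
    σ ^ 2 • hessianSumMulSmul (fun i => D (i - 1)) (fun i => D (i + 1)) γ t t = (-2 : ℝ) • γ k := by
  have hterm (i : ZMod 3) : σ ^ 2 * (D (i - 1) t * D (i + 1) t + D (i + 1) t * D (i - 1) t) =
      if i = k then -2 else 0 := by
    have h := edgeIndicator_mul (R := ℝ) i k
    rw [← hD, ← hD] at h
    split_ifs at h ⊢ <;> linear_combination 2 * h
  simp only [hessianSumMulSmul_apply, Finset.smul_sum, smul_smul, hterm, ite_smul, zero_smul,
    Finset.sum_ite_eq', Finset.mem_univ, if_true]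

lemma eq_smul_perp_of_dotProduct_eq_zero {n e : Fin 2 → ℝ} (hn : n 0 ^ 2 + n 1 ^ 2 = 1)
    (he : n ⬝ᵥ e = 0) : e = (perp n ⬝ᵥ e) • perp n := by
  simp only [dotProduct, Fin.sum_univ_two, perp] at he ⊢
  ext i
  fin_cases i
  · simp; linear_combination (-e 0) * hn + n 0 * he
  · simp; linear_combination (-e 1) * hn + n 1 * he

lemma exists_hasFDerivAt_of_eq_affine {f : (Fin 2 → ℝ) → ℝ} {a b c : ℝ}
    (h : ∀ x, f x = a * x 0 + b * x 1 + c) :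
    ∃ D : (Fin 2 → ℝ) →L[ℝ] ℝ, (∀ x, HasFDerivAt f D x) ∧ ∀ y z, D (y - z) = f y - f z := by
  refine ⟨a • ContinuousLinearMap.proj 0 + b • ContinuousLinearMap.proj 1, fun x => ?_,
    fun y z => ?_⟩
  · rw [funext h]
    exact (((hasFDerivAt_apply 0 x).const_mul a).add
      ((hasFDerivAt_apply 1 x).const_mul b)).add_const c
  · simp [h]
    ring

lemma sq_add_sq_eq_of_dotProduct_eq_zero {n e : Fin 2 → ℝ} (hn : n 0 ^ 2 + n 1 ^ 2 = 1)
    (he : n ⬝ᵥ e = 0) : e 0 ^ 2 + e 1 ^ 2 = (perp n ⬝ᵥ e) ^ 2 := by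
  simp only [dotProduct, Fin.sum_univ_two, perp] at he ⊢
  simp
  linear_combination (n 0 * e 0 + n 1 * e 1) * he - (e 0 ^ 2 + e 1 ^ 2) * hn

lemma coefficient_formulas_of_DirD_eq_CurlS {τ : (Fin 2 → ℝ) → Matrix (Fin 2) (Fin 2) ℝ}
    {H : (Fin 2 → ℝ) →L[ℝ] (Fin 2 → ℝ) →L[ℝ] (Fin 2 → ℝ)} (hτ : ∀ g, DirD τ g = CurlS (H g) 0)
    (hH : ∀ g w, H g w = H w g) {n γ : Fin 2 → ℝ} {σ : ℝ}
    (hσ : σ ^ 2 • H (perp n) (perp n) = (-2 : ℝ) • γ) :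
    γ ⬝ᵥ n = σ ^ 2 / 2 * (n ⬝ᵥ DirD τ (perp n) *ᵥ n) ∧
    γ ⬝ᵥ perp n =
      σ ^ 2 / 2 * (n ⬝ᵥ DirD τ n *ᵥ n) + σ ^ 2 * (perp n ⬝ᵥ DirD τ (perp n) *ᵥ n) := by
  have hn := congrArg (n ⬝ᵥ ·) hσ
  have ht := congrArg (perp n ⬝ᵥ ·) hσ
  simp only [dotProduct_smul, smul_eq_mul] at hn ht
  rw [dotProduct_comm γ, dotProduct_comm γ]
  simp only [hτ, dotProduct_CurlS_mulVec, ContinuousLinearMap.fderiv, perp_perp, map_neg,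
    dotProduct_neg, hH n (perp n)]
  constructor
  · linear_combination (1 / 2 : ℝ) * hn
  · linear_combination (1 / 2 : ℝ) * ht

theorem curlS_bubble_coefficient_formulas_general
    (p : ZMod 3 → Fin 2 → ℝ)
    (lam : ZMod 3 → (Fin 2 → ℝ) → ℝ)
    (hlam_aff : ∀ k, ∃ a b c : ℝ, ∀ x, lam k x = a * x 0 + b * x 1 + c)
    (hlam_val : ∀ k j, lam k (p j) = if k = j then 1 else 0)
    (n : ZMod 3 → Fin 2 → ℝ)
    (hn_unit : ∀ k, (n k 0) ^ 2 + (n k 1) ^ 2 = 1)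
    (hn_perp : ∀ k, n k ⬝ᵥ (fun j => p (k + 1) j - p (k - 1) j) = 0)
    (t : ZMod 3 → Fin 2 → ℝ)
    (ht : ∀ k, t k = ![-(n k 1), n k 0])
    (L : ZMod 3 → ℝ)
    (hL : ∀ k, L k =
      Real.sqrt ((p (k + 1) 0 - p (k - 1) 0) ^ 2 + (p (k + 1) 1 - p (k - 1) 1) ^ 2))
    (γ : ZMod 3 → Fin 2 → ℝ)
    (τ : (Fin 2 → ℝ) → Matrix (Fin 2) (Fin 2) ℝ)
    (hτ : τ = fun x => CurlS
      (fun y => ∑ i : ZMod 3, (lam (i - 1) y * lam (i + 1) y) • γ i) x)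
    (k : ZMod 3) :
    γ k ⬝ᵥ n k = (L k) ^ 2 / 2 * (n k ⬝ᵥ (DirD τ (t k)) *ᵥ n k) ∧
    γ k ⬝ᵥ t k = (L k) ^ 2 / 2 * (n k ⬝ᵥ (DirD τ (n k)) *ᵥ n k) +
      (L k) ^ 2 * (t k ⬝ᵥ (DirD τ (t k)) *ᵥ n k) := by
  choose a b c hab using hlam_aff
  choose D hD hD_sub using fun j => exists_hasFDerivAt_of_eq_affine (hab j)
  set σ := perp (n k) ⬝ᵥ (p (k + 1) - p (k - 1))
  have hL_sq : L k ^ 2 = σ ^ 2 := by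
    rw [hL, Real.sq_sqrt (by positivity)]
    exact sq_add_sq_eq_of_dotProduct_eq_zero (hn_unit k) (hn_perp k)
  have hedge : p (k + 1) - p (k - 1) = σ • perp (n k) :=
    eq_smul_perp_of_dotProduct_eq_zero (hn_unit k) (hn_perp k)
  have hD_tangent (j : ZMod 3) : σ * D j (perp (n k)) =
      (if j = k + 1 then 1 else 0) - (if j = k - 1 then 1 else 0) := by
    rw [← smul_eq_mul, ← map_smul, ← hedge, hD_sub, hlam_val, hlam_val]
  have hDirD (g : Fin 2 → ℝ) :
      DirD τ g = CurlS (hessianSumMulSmul (fun i => D (i - 1)) (fun i => D (i + 1)) γ g) 0 :=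
    hτ ▸ DirD_CurlS (fun x => hasFDerivAt_sum_mul_smul (fun i => hD _ x) (fun i => hD _ x) γ)
      (hasFDerivAt_sum_smul_smulRight (fun i => hD _ 0) (fun i => hD _ 0) γ) g
  rw [ht k, hL_sq]
  exact coefficient_formulas_of_DirD_eq_CurlS hDirD (hessianSumMulSmul_comm _ _ _)
    (sq_smul_hessianSumMulSmul_tangent hD_tangent γ)

/-- Coefficient formulas: on a nondegenerate triangle with vertices `p_k`
(indices mod 3), barycentric coordinates `λ_k`, bubbles `φ_k = λ_{k−1} λ_{k+1}`,
edge lengths `ℓ_k`, unit normals `n_k`, and tangents `t_k = n_k^⊥`, if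
`τ = Curl^s(Σ_i γ_i φ_i)` for constant vectors `γ_i ∈ ℝ²`, then for each `k`,
`γ_k·n_k = (ℓ_k²/2) n_kᵀ(∂_{t_k}τ)n_k` and
`γ_k·t_k = (ℓ_k²/2) n_kᵀ(∂_{n_k}τ)n_k + ℓ_k² t_kᵀ(∂_{t_k}τ)n_k`. -/
theorem curlS_bubble_coefficient_formulas
    (p : ZMod 3 → Fin 2 → ℝ) (hp : AffineIndependent ℝ p)
    (lam : ZMod 3 → (Fin 2 → ℝ) → ℝ)
    (hlam_aff : ∀ k, ∃ a b c : ℝ, ∀ x, lam k x = a * x 0 + b * x 1 + c)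
    (hlam_val : ∀ k j, lam k (p j) = if k = j then 1 else 0)
    (n : ZMod 3 → Fin 2 → ℝ)
    (hn_unit : ∀ k, (n k 0) ^ 2 + (n k 1) ^ 2 = 1)
    (hn_perp : ∀ k, n k ⬝ᵥ (fun j => p (k + 1) j - p (k - 1) j) = 0)
    (t : ZMod 3 → Fin 2 → ℝ)
    (ht : ∀ k, t k = ![-(n k 1), n k 0])
    (L : ZMod 3 → ℝ)
    (hL : ∀ k, L k =
      Real.sqrt ((p (k + 1) 0 - p (k - 1) 0) ^ 2 + (p (k + 1) 1 - p (k - 1) 1) ^ 2))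
    (γ : ZMod 3 → Fin 2 → ℝ)
    (τ : (Fin 2 → ℝ) → Matrix (Fin 2) (Fin 2) ℝ)
    (hτ : τ = fun x => CurlS
      (fun y => ∑ i : ZMod 3, (lam (i - 1) y * lam (i + 1) y) • γ i) x)
    (k : ZMod 3) :
    γ k ⬝ᵥ n k = (L k) ^ 2 / 2 * (n k ⬝ᵥ (DirD τ (t k)) *ᵥ n k) ∧
    γ k ⬝ᵥ t k = (L k) ^ 2 / 2 * (n k ⬝ᵥ (DirD τ (n k)) *ᵥ n k) +
      (L k) ^ 2 * (t k ⬝ᵥ (DirD τ (t k)) *ᵥ n k) :=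
  curlS_bubble_coefficient_formulas_general p lam hlam_aff hlam_val n hn_unit hn_perp t ht L hL γ τ
    hτ k
end

section
/- Let r, r′: ℝ²→ℝ² be vector fields all of whose components are polynomials of degree at most 2. If Curl^s r = Curl^s r′ on all of ℝ² and r(x) = r′(x) for every x on some line ℓ⊂ℝ², then r = r′ on all of ℝ². -/
open Matrix

/-! `Curl^s` is linear, so `g = r - r'` satisfies `Curl^s g = 0`, i.e. `∂₂g₀ = ∂₁g₁ = 0` and
`∂₁g₀ = ∂₂g₁`. The first two equations make `∂₁g₀` invariant under vertical and `∂₂g₁` under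
horizontal translations; as they agree, they equal one constant `c`, and `g x = c x + b`.
Vanishing on the line `a + ℝ v` gives `c v = 0`, so `c = 0` and then `b = 0`. -/

section Calculus

variable {E F : Type*} [NormedAddCommGroup E] [NormedSpace ℝ E]
  [NormedAddCommGroup F] [NormedSpace ℝ F] {f : E → F} {w : E}

theorem apply_add_smul_of_fderiv_apply_eq (hf : Differentiable ℝ f) {c : F}
    (hc : ∀ x, fderiv ℝ f x w = c) (x : E) (t : ℝ) :
    f (x + t • w) = f x + t • c := by
  have hderiv (s : ℝ) : HasDerivAt (fun s : ℝ => f (x + s • w) - s • c) 0 s := by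
    have hline : HasDerivAt (fun s : ℝ => x + s • w) w s :=
      ((hasDerivAt_id s).smul_const w).const_add x |>.congr_deriv (one_smul ℝ w)
    have := ((hf _).hasFDerivAt.comp_hasDerivAt s hline).sub ((hasDerivAt_id s).smul_const c)
    rwa [hc, one_smul, sub_self] at this
  have := is_const_of_deriv_eq_zero (fun s => (hderiv s).differentiableAt)
    (fun s => (hderiv s).deriv) t 0
  simpa [sub_eq_iff_eq_add, add_comm] using this

theorem fderiv_add_smul_of_fderiv_apply_eq_zero (hf : Differentiable ℝ f)
    (hw : ∀ x, fderiv ℝ f x w = 0) (x : E) (t : ℝ) :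
    fderiv ℝ f (x + t • w) = fderiv ℝ f x := by
  have hinv : (fun y => f (y + t • w)) = f :=
    funext fun y => by simpa using apply_add_smul_of_fderiv_apply_eq hf hw y t
  rw [← fderiv_comp_add_right, hinv]

end Calculus

theorem differentiable_of_forall_eq_eval {σ ι : Type*} [Fintype σ] [Fintype ι]
    {r : (σ → ℝ) → ι → ℝ} (hr : ∀ i, ∃ P : MvPolynomial σ ℝ, ∀ x, r x i = MvPolynomial.eval x P) :
    Differentiable ℝ r := by
  refine differentiable_pi.2 fun i => ?_
  obtain ⟨P, hP⟩ := hr i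
  rw [show (fun x => r x i) = fun x => MvPolynomial.eval x P from funext hP]
  exact fun x => (AnalyticOnNhd.eval_mvPolynomial P x trivial).differentiableAt

theorem curlS_sub {r r' : (Fin 2 → ℝ) → Fin 2 → ℝ} {x : Fin 2 → ℝ}
    (hr : DifferentiableAt ℝ r x) (hr' : DifferentiableAt ℝ r' x) :
    CurlS (r - r') x = CurlS r x - CurlS r' x := by
  ext i j
  simp only [CurlS, Curl, fderiv_sub hr hr', Matrix.sub_apply, Matrix.smul_apply,
    Matrix.add_apply, transpose_apply, of_apply, _root_.sub_apply, Pi.sub_apply, smul_eq_mul]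
  split_ifs <;> ring

theorem fderiv_apply_of_curlS_eq_zero {g : (Fin 2 → ℝ) → Fin 2 → ℝ} {x : Fin 2 → ℝ}
    (h : CurlS g x = 0) :
    fderiv ℝ g x ![0, 1] 0 = 0 ∧ fderiv ℝ g x ![1, 0] 1 = 0 ∧
      fderiv ℝ g x ![1, 0] 0 = fderiv ℝ g x ![0, 1] 1 := by
  have h00 := congrFun₂ h 0 0
  have h11 := congrFun₂ h 1 1
  have h01 := congrFun₂ h 0 1
  simp only [CurlS, Curl, Matrix.smul_apply, Matrix.add_apply, transpose_apply, of_apply,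
    Matrix.zero_apply, smul_eq_mul, if_pos, one_ne_zero, if_false] at h00 h11 h01
  exact ⟨by linarith, by linarith, by linarith⟩

theorem eq_smul_add_smul (x : Fin 2 → ℝ) : x = x 0 • ![1, 0] + x 1 • ![0, 1] := by
  ext i; fin_cases i <;> simp

theorem exists_affine_of_partials {u v : (Fin 2 → ℝ) → ℝ}
    (hu : Differentiable ℝ u) (hv : Differentiable ℝ v)
    (hu₂ : ∀ x, fderiv ℝ u x ![0, 1] = 0) (hv₁ : ∀ x, fderiv ℝ v x ![1, 0] = 0)
    (huv : ∀ x, fderiv ℝ u x ![1, 0] = fderiv ℝ v x ![0, 1]) :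
    ∃ c : ℝ, ∀ x, u x = u 0 + x 0 * c ∧ v x = v 0 + x 1 * c := by
  have hu_inv := fderiv_add_smul_of_fderiv_apply_eq_zero hu hu₂
  have hv_inv := fderiv_add_smul_of_fderiv_apply_eq_zero hv hv₁
  have hu₁ (x : Fin 2 → ℝ) : fderiv ℝ u x ![1, 0] = fderiv ℝ u 0 ![1, 0] := by
    calc fderiv ℝ u x ![1, 0]
        = fderiv ℝ u (x 0 • ![1, 0] + x 1 • ![0, 1]) ![1, 0] := by rw [← eq_smul_add_smul]
      _ = fderiv ℝ v (0 + x 0 • ![1, 0]) ![0, 1] := by rw [hu_inv, huv, zero_add]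
      _ = fderiv ℝ u 0 ![1, 0] := by rw [hv_inv, huv]
  refine ⟨fderiv ℝ u 0 ![1, 0], fun x => ⟨?_, ?_⟩⟩
  · calc u x = u (x 0 • ![1, 0] + x 1 • ![0, 1]) := by rw [← eq_smul_add_smul]
      _ = u (0 + x 0 • ![1, 0]) := by
        rw [apply_add_smul_of_fderiv_apply_eq hu hu₂, smul_zero, add_zero, zero_add]
      _ = u 0 + x 0 * fderiv ℝ u 0 ![1, 0] := apply_add_smul_of_fderiv_apply_eq hu hu₁ 0 (x 0)
  · have hv₂ (y : Fin 2 → ℝ) : fderiv ℝ v y ![0, 1] = fderiv ℝ u 0 ![1, 0] := by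
      rw [← huv, hu₁]
    calc v x = v (x 1 • ![0, 1] + x 0 • ![1, 0]) := by rw [add_comm, ← eq_smul_add_smul]
      _ = v (0 + x 1 • ![0, 1]) := by
        rw [apply_add_smul_of_fderiv_apply_eq hv hv₁, smul_zero, add_zero, zero_add]
      _ = v 0 + x 1 * fderiv ℝ u 0 ![1, 0] := apply_add_smul_of_fderiv_apply_eq hv hv₂ 0 (x 1)

theorem exists_eq_smul_add_of_curlS_eq_zero {g : (Fin 2 → ℝ) → Fin 2 → ℝ}
    (hg : Differentiable ℝ g) (hcurl : ∀ x, CurlS g x = 0) :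
    ∃ (c : ℝ) (b : Fin 2 → ℝ), ∀ x, g x = c • x + b := by
  have hpartial (i : Fin 2) (x w : Fin 2 → ℝ) :
      fderiv ℝ (fun y => g y i) x w = fderiv ℝ g x w i := by
    rw [fderiv_apply (hg x)]; rfl
  obtain ⟨c, hc⟩ := exists_affine_of_partials (differentiable_pi.1 hg 0)
    (differentiable_pi.1 hg 1)
    (fun x => by rw [hpartial]; exact (fderiv_apply_of_curlS_eq_zero (hcurl x)).1)
    (fun x => by rw [hpartial]; exact (fderiv_apply_of_curlS_eq_zero (hcurl x)).2.1)
    (fun x => by rw [hpartial, hpartial]; exact (fderiv_apply_of_curlS_eq_zero (hcurl x)).2.2)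
  refine ⟨c, g 0, fun x => funext fun i => ?_⟩
  fin_cases i
  · simpa [add_comm, mul_comm] using (hc x).1
  · simpa [add_comm, mul_comm] using (hc x).2

theorem eq_zero_of_smul_add_eq_zero_on_line {K V : Type*} [Field K] [AddCommGroup V]
    [Module K V] {c : K} {a b v : V} (hv : v ≠ 0) (hline : ∀ s : K, c • (a + s • v) + b = 0) :
    c = 0 ∧ b = 0 := by
  have hcv : c • v = 0 := by
    have h₀ := hline 0
    have h₁ := hline 1
    rw [zero_smul, add_zero] at h₀
    rwa [one_smul, smul_add, add_right_comm, h₀, zero_add] at h₁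
  have hc : c = 0 := (smul_eq_zero.1 hcv).resolve_right hv
  refine ⟨hc, ?_⟩
  simpa [hc] using hline 0

/-- If `r, r' : ℝ² → ℝ²` have components that are polynomials of degree at most 2,
`Curl^s r = Curl^s r'` on all of `ℝ²`, and `r = r'` on some line
`ℓ = {a + s v : s ∈ ℝ}` (with `v ≠ 0`), then `r = r'` on all of `ℝ²`. -/
theorem quadratic_fields_eq_of_curlS_eq_and_eq_on_line
    (r r' : (Fin 2 → ℝ) → Fin 2 → ℝ)
    (hr : ∀ i : Fin 2, ∃ P : MvPolynomial (Fin 2) ℝ,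
      P.totalDegree ≤ 2 ∧ ∀ x, r x i = MvPolynomial.eval x P)
    (hr' : ∀ i : Fin 2, ∃ P : MvPolynomial (Fin 2) ℝ,
      P.totalDegree ≤ 2 ∧ ∀ x, r' x i = MvPolynomial.eval x P)
    (hcurl : ∀ x, CurlS r x = CurlS r' x)
    (a v : Fin 2 → ℝ) (hv : v ≠ 0)
    (hline : ∀ s : ℝ, r (a + s • v) = r' (a + s • v)) :
    ∀ x, r x = r' x := by
  have hdiff := differentiable_of_forall_eq_eval fun i => (hr i).imp fun _ hP => hP.2
  have hdiff' := differentiable_of_forall_eq_eval fun i => (hr' i).imp fun _ hP => hP.2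
  obtain ⟨c, b, hrigid⟩ := exists_eq_smul_add_of_curlS_eq_zero (hdiff.sub hdiff')
    fun x => by rw [curlS_sub (hdiff x) (hdiff' x), hcurl, sub_self]
  obtain ⟨rfl, rfl⟩ := eq_zero_of_smul_add_eq_zero_on_line hv
    fun s => by rw [← hrigid, Pi.sub_apply, hline, sub_self]
  intro x
  simpa [sub_eq_zero] using hrigid x
end
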